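/- Fix a linear order ≺ on A_c and the induced lexicographic order on Red_A(c). Then within each Hurwitz orbit of Red_A(c), the lexicographically smallest factorization is ≺-rising (weakly increasing). -/

import Mathlib

variable {G : Type*} [Group G]

/-- `A` generates `G` as a monoid. -/
def GeneratesM (A : Set G) : Prop :=
  ∀ x : G, ∃ l : List G, (∀ a ∈ l, a ∈ A) ∧ l.prod = x

/-- `A` is closed under `G`-conjugation. -/
def ConjClosed (A : Set G) : Prop :=
  ∀ g a : G, a ∈ A → g * a * g⁻¹ ∈ A

/-- The `A`-length of `x`: minimal number of factors from `A` needed to write `x`. -/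
noncomputable def lenA (A : Set G) (x : G) : ℕ :=
  sInf {n : ℕ | ∃ l : List G, (∀ a ∈ l, a ∈ A) ∧ l.prod = x ∧ l.length = n}

/-- The `A`-prefix order. -/
def leA (A : Set G) (x y : G) : Prop :=
  lenA A x + lenA A (x⁻¹ * y) = lenA A y

/-- The set of reduced `A`-factorizations of `x`, as lists. -/
def RedA (A : Set G) (x : G) : Set (List G) :=
  {l : List G | (∀ a ∈ l, a ∈ A) ∧ l.prod = x ∧ l.length = lenA A x}

/-- `A_c`: the generators occurring below `c`. -/
def Ac (A : Set G) (c : G) : Set G := {a : G | a ∈ A ∧ leA A a c}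

/-- A single Hurwitz move on factorizations. -/
def HurwitzMove : List G → List G → Prop := fun l m =>
  ∃ (p s : List G) (a b : G),
    l = p ++ a :: b :: s ∧ m = p ++ b :: (b⁻¹ * a * b) :: s

/-- `r` is a linear order on the set `S`. -/
def IsLinearOrderOn (S : Set G) (r : G → G → Prop) : Prop :=
  (∀ a ∈ S, r a a) ∧
  (∀ a ∈ S, ∀ b ∈ S, r a b → r b a → a = b) ∧
  (∀ a ∈ S, ∀ b ∈ S, ∀ c ∈ S, r a b → r b c → r a c) ∧
  (∀ a ∈ S, ∀ b ∈ S, r a b ∨ r b a)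

/-- `r` is a `c`-compatible order: every length-2 element below `c` has a unique
rising reduced factorization. -/
def CompatibleOrder (A : Set G) (c : G) (r : G → G → Prop) : Prop :=
  ∀ g : G, leA A g c → lenA A g = 2 →
    ∃! l : List G, l ∈ RedA A g ∧ l.Chain' r

/-- Two factorizations correspond to maximal chains differing in exactly one element. -/
def ChainAdj (l m : List G) : Prop :=
  l ≠ m ∧ ∃ (p s : List G) (a b a' b' : G),
    l = p ++ a :: b :: s ∧ m = p ++ a' :: b' :: s ∧ a * b = a' * b'

/-- Covering relation in the graded factorization poset. -/
def CoversA (A : Set G) (x y : G) : Prop := leA A x y ∧ lenA A y = lenA A x + 1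

/-- `F_≺(a; g)`: upper covers of the atom `a` in `P_g` that also cover a strictly
smaller atom. -/
def Fset (A : Set G) (r : G → G → Prop) (a g : G) : Set G :=
  {h : G | CoversA A a h ∧ leA A h g ∧
    ∃ a' ∈ A, a' ≠ a ∧ r a' a ∧ CoversA A a' h}

/-- `P_c` is well-covered with respect to `r`. -/
def WellCovered (A : Set G) (c : G) (r : G → G → Prop) : Prop :=
  ∀ a ∈ A, leA A a c →
    (Fset A r a c = ∅ ↔ ∀ b ∈ A, leA A b c → r a b)

/-- `P_c` is totally well-covered with respect to `r`. -/
def TotallyWellCovered (A : Set G) (c : G) (r : G → G → Prop) : Prop :=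
  ∀ g : G, leA A g c → WellCovered A g r

/-!
If two adjacent letters `a, b` of `l` were out of order, the Hurwitz move at that position would
replace them by `b, b⁻¹ a b`, giving a reduced factorization in the same orbit that is
lexicographically smaller than `l`. Adjacent equal letters are handled by reflexivity of `≺`, which
applies because every letter of a reduced factorization of `c` lies below `c`.
-/

section Factorizations

variable {A : Set G}

lemma lenA_le_length {l : List G} (hl : ∀ a ∈ l, a ∈ A) : lenA A l.prod ≤ l.length :=
  Nat.sInf_le ⟨l, hl, rfl, rfl⟩

lemma redA_prod_nonempty {l : List G} (hl : ∀ a ∈ l, a ∈ A) : (RedA A l.prod).Nonempty :=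
  Nat.sInf_mem (s := {n | ∃ m : List G, (∀ a ∈ m, a ∈ A) ∧ m.prod = l.prod ∧ m.length = n})
    ⟨l.length, l, hl, rfl, rfl⟩

lemma lenA_mul_le {l₁ l₂ : List G} (h₁ : ∀ a ∈ l₁, a ∈ A) (h₂ : ∀ a ∈ l₂, a ∈ A) :
    lenA A (l₁.prod * l₂.prod) ≤ lenA A l₁.prod + lenA A l₂.prod := by
  obtain ⟨m₁, hA₁, hprod₁, hlen₁⟩ := redA_prod_nonempty h₁
  obtain ⟨m₂, hA₂, hprod₂, hlen₂⟩ := redA_prod_nonempty h₂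
  have hA : ∀ a ∈ m₁ ++ m₂, a ∈ A := by
    simpa only [List.mem_append, or_imp, forall_and] using ⟨hA₁, hA₂⟩
  simpa [hprod₁, hprod₂, hlen₁, hlen₂] using lenA_le_length hA

lemma prod_append_cons (p s : List G) (a : G) :
    (p ++ a :: s).prod = a * (p.map (MulAut.conj a⁻¹) ++ s).prod := by
  simp [List.prod_append, ← map_list_prod, mul_assoc]

lemma leA_of_mem_redA (hconj : ConjClosed A) {c a : G} {l : List G} (hl : l ∈ RedA A c)
    (ha : a ∈ l) : leA A a c := by
  obtain ⟨p, s, rfl⟩ := List.append_of_mem ha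
  obtain ⟨hA, hprod, hlen⟩ := hl
  -- conjugating the letters before `a` writes `a⁻¹ * c` with one letter fewer than `l`
  set q := p.map (MulAut.conj a⁻¹) ++ s
  have hqA : ∀ x ∈ q, x ∈ A := by
    simp only [q, List.mem_append, List.mem_map]
    rintro x (⟨y, hy, rfl⟩ | hx)
    · exact hconj a⁻¹ y (hA y (by simp [hy]))
    · exact hA x (by simp [hx])
  have hq : q.prod = a⁻¹ * c := by
    rw [← hprod, prod_append_cons, inv_mul_cancel_left]
  have hq_length : q.length + 1 = lenA A c := by simp [q, ← hlen]; omega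
  have haA : ∀ x ∈ [a], x ∈ A := by simpa using hA a (by simp)
  have ha_len : lenA A a ≤ 1 := by simpa using lenA_le_length haA
  have hq_len : lenA A (a⁻¹ * c) ≤ q.length := hq ▸ lenA_le_length hqA
  have hc_len : lenA A c ≤ lenA A a + lenA A (a⁻¹ * c) := by
    simpa [hq] using lenA_mul_le haA hqA
  unfold leA
  omega

lemma HurwitzMove.mem_redA (hconj : ConjClosed A) {c : G} {l m : List G}
    (hmove : HurwitzMove l m) (hl : l ∈ RedA A c) : m ∈ RedA A c := by
  obtain ⟨p, s, a, b, rfl, rfl⟩ := hmove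
  obtain ⟨hA, hprod, hlen⟩ := hl
  refine ⟨?_, ?_, ?_⟩
  · have hconj_ab : b⁻¹ * a * b ∈ A := by simpa using hconj b⁻¹ a (hA a (by simp))
    intro x hx
    simp only [List.mem_append, List.mem_cons] at hx
    rcases hx with hx | rfl | rfl | hx
    · exact hA x (by simp [hx])
    · exact hA x (by simp)
    · exact hconj_ab
    · exact hA x (by simp [hx])
  · simpa [List.prod_append, mul_assoc] using hprod
  · simpa using hlen

end Factorizations

lemma List.rel_of_lex_append_cons {α : Type*} {r : α → α → Prop} [Std.Irrefl r]
    {p u v : List α} {a b : α} (hab : a ≠ b) (h : List.Lex r (p ++ a :: u) (p ++ b :: v)) :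
    r a b := by
  induction p with
  | nil => simpa [hab] using List.cons_lex_cons_iff.mp h
  | cons x p ih => exact ih (List.lex_cons_iff.mp h)

theorem lex_smallest_in_orbit_is_rising_general (A : Set G)
    (hconj : ConjClosed A) (c : G)
    (r : G → G → Prop) (hlin : IsLinearOrderOn (Ac A c) r)
    (l : List G) (hl : l ∈ RedA A c)
    (hmin : ∀ m ∈ RedA A c, Relation.EqvGen HurwitzMove l m → m ≠ l →
      List.Lex (fun u v => r u v ∧ u ≠ v) l m) :
    l.Chain' r := by
  refine List.isChain_iff_forall_rel_of_append_cons_cons.mpr fun a b p s hsplit => ?_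
  by_cases hab : a = b
  · subst hab
    have ha : a ∈ l := by simp [hsplit]
    exact hlin.1 a ⟨hl.1 a ha, leA_of_mem_redA hconj hl ha⟩
  · have hmove : HurwitzMove l (p ++ b :: (b⁻¹ * a * b) :: s) := ⟨p, s, a, b, hsplit, rfl⟩
    have hne : p ++ b :: (b⁻¹ * a * b) :: s ≠ l := by simp [hsplit, Ne.symm hab]
    have hlex := hmin _ (hmove.mem_redA hconj hl) (.rel _ _ hmove) hne
    rw [hsplit] at hlex
    have : Std.Irrefl fun u v : G => r u v ∧ u ≠ v := ⟨fun _ h => h.2 rfl⟩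
    exact (List.rel_of_lex_append_cons hab hlex).1

theorem lex_smallest_in_orbit_is_rising (A : Set G) (hgen : GeneratesM A)
    (hconj : ConjClosed A) (c : G) (hfin : (RedA A c).Finite)
    (r : G → G → Prop) (hlin : IsLinearOrderOn (Ac A c) r)
    (l : List G) (hl : l ∈ RedA A c)
    (hmin : ∀ m ∈ RedA A c, Relation.EqvGen HurwitzMove l m → m ≠ l →
      List.Lex (fun u v => r u v ∧ u ≠ v) l m) :
    l.Chain' r :=
  lex_smallest_in_orbit_is_rising_general A hconj c r hlin l hl hmin
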